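/- For every n ≥ 1 and every coloring f : [ℕ]ⁿ → ℕ, there exists an f-computable 2-bounded coloring g : [ℕ]^{n+1} → ℕ such that every infinite rainbow for g is, up to removing finitely many elements, an infinite set thin for f. -/

import Mathlib

open Classical Filter

noncomputable section

/-- Codes for partial functions recursive in an oracle. -/
inductive OCode : Type
  | zero | succ | left | right | oracle
  | pair (a b : OCode) | comp (a b : OCode) | prec (a b : OCode) | rfind' (a : OCode)

/-- Evaluation of an oracle code with oracle `O`. -/
def OCode.eval (O : ℕ →. ℕ) : OCode → ℕ →. ℕ
  | .zero => pure 0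
  | .succ => Nat.succ
  | .left => ↑fun n : ℕ => n.unpair.1
  | .right => ↑fun n : ℕ => n.unpair.2
  | .oracle => O
  | .pair a b => fun n => Nat.pair <$> a.eval O n <*> b.eval O n
  | .comp a b => fun n => b.eval O n >>= a.eval O
  | .prec a b => Nat.unpaired fun m n =>
      n.rec (a.eval O m) fun y IH => do let i ← IH; b.eval O (Nat.pair m (Nat.pair y i))
  | .rfind' a => fun n => Nat.rfind fun m => (fun k => k = 0) <$> a.eval O (Nat.pair n m)

/-- An injective numbering of oracle codes. -/
def OCode.encodeC : OCode → ℕ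
  | .zero => Nat.pair 0 0
  | .succ => Nat.pair 1 0
  | .left => Nat.pair 2 0
  | .right => Nat.pair 3 0
  | .oracle => Nat.pair 4 0
  | .pair a b => Nat.pair 5 (Nat.pair a.encodeC b.encodeC)
  | .comp a b => Nat.pair 6 (Nat.pair a.encodeC b.encodeC)
  | .prec a b => Nat.pair 7 (Nat.pair a.encodeC b.encodeC)
  | .rfind' a => Nat.pair 8 a.encodeC

/-- `f` is partial recursive in the oracle `O`. -/
def RecIn (O : ℕ →. ℕ) (f : ℕ →. ℕ) : Prop := ∃ c : OCode, c.eval O = f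

/-- The `e`-th partial function recursive in `O` (`Φ_e^O`). -/
def phi (O : ℕ →. ℕ) (e : ℕ) : ℕ →. ℕ :=
  if h : ∃ c : OCode, c.encodeC = e then h.choose.eval O else fun _ => Part.none

/-- The characteristic function of a set of naturals, as an oracle. -/
def chOracle (X : Set ℕ) : ℕ →. ℕ := fun n => Part.some (if n ∈ X then 1 else 0)

/-- A total function as an oracle. -/
def fnOracle (f : ℕ → ℕ) : ℕ →. ℕ := fun n => Part.some (f n)

/-- A two-variable total function as an oracle. -/
def pairFnOracle (f : ℕ → ℕ → ℕ) : ℕ →. ℕ :=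
  fun n => Part.some (f n.unpair.1 n.unpair.2)

/-- The Turing jump of a set `X` : the halting problem relative to `X`. -/
def jumpSet (X : Set ℕ) : Set ℕ := {e | (phi (chOracle X) e e).Dom}

/-- The effective join of two sets of naturals. -/
def joinSet (A B : Set ℕ) : Set ℕ :=
  {n | (n % 2 = 0 ∧ n / 2 ∈ A) ∨ (n % 2 = 1 ∧ n / 2 ∈ B)}

/-- The join of two oracles. -/
def joinO (O₁ O₂ : ℕ →. ℕ) : ℕ →. ℕ :=
  fun n => if n % 2 = 0 then O₁ (n / 2) else O₂ (n / 2)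

/-- Turing reducibility between sets of naturals. -/
def setLEset (A B : Set ℕ) : Prop :=
  RecIn (chOracle B) (fnOracle fun n => if n ∈ A then 1 else 0)


/-- An increasing list of length `k` with entries from `A`. -/
def incList (A : Set ℕ) (k : ℕ) (l : List ℕ) : Prop :=
  l.length = k ∧ l.Pairwise (· < ·) ∧ ∀ x ∈ l, x ∈ A

/-- A coloring of tuples (coded as lists) as an oracle. -/
def listOracle (f : List ℕ → ℕ) : ℕ →. ℕ :=
  fun n => Part.some (f (Denumerable.ofNat (List ℕ) n))

/-!
Colors are codes of tuples: `(y, z⃗)` is colored by the code of `(x, z⃗)` when `f z⃗ = ⟨x, y⟩`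
with `x < y`, and by its own code otherwise, so only `(x, z⃗)` and `(y, z⃗)` can share a color.
If `R` is a rainbow and `x < y` lie in `R`, then no `z⃗` from `R` above `y` has
`f z⃗ = ⟨x, y⟩`, as `(x, z⃗)` and `(y, z⃗)` would collide; so `R` minus `[0, y]` omits `⟨x, y⟩`.
-/

theorem RecIn.of_natPartrec {h : ℕ →. ℕ} (hh : Nat.Partrec h) (O : ℕ →. ℕ) : RecIn O h := by
  induction hh with
  | zero => exact ⟨.zero, rfl⟩
  | succ => exact ⟨.succ, rfl⟩
  | left => exact ⟨.left, rfl⟩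
  | right => exact ⟨.right, rfl⟩
  | pair _ _ iha ihb =>
      obtain ⟨ca, rfl⟩ := iha; obtain ⟨cb, rfl⟩ := ihb
      exact ⟨.pair ca cb, rfl⟩
  | comp _ _ iha ihb =>
      obtain ⟨ca, rfl⟩ := iha; obtain ⟨cb, rfl⟩ := ihb
      exact ⟨.comp ca cb, rfl⟩
  | prec _ _ iha ihb =>
      obtain ⟨ca, rfl⟩ := iha; obtain ⟨cb, rfl⟩ := ihb
      exact ⟨.prec ca cb, rfl⟩
  | rfind _ iha =>
      obtain ⟨ca, rfl⟩ := iha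
      exact ⟨.rfind' ca, rfl⟩

theorem OCode.exists_eval_eq_some_of_primrec {h : ℕ → ℕ} (hh : Primrec h) (O : ℕ →. ℕ) :
    ∃ c : OCode, ∀ n, c.eval O n = Part.some (h n) := by
  obtain ⟨c, hc⟩ := RecIn.of_natPartrec (Partrec.nat_iff.1 hh.to_comp.partrec) O
  exact ⟨c, fun n => by rw [hc, PFun.coe_val]⟩

theorem OCode.eval_comp_of_eq_some {O : ℕ →. ℕ} {a b : OCode} {n k : ℕ}
    (hb : b.eval O n = Part.some k) : (OCode.comp a b).eval O n = a.eval O k := by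
  simp only [OCode.eval, hb]
  exact Part.bind_some _ _

theorem OCode.eval_pair_of_eq_some {O : ℕ →. ℕ} {a b : OCode} {n x y : ℕ}
    (ha : a.eval O n = Part.some x) (hb : b.eval O n = Part.some y) :
    (OCode.pair a b).eval O n = Part.some (Nat.pair x y) := by
  simp [OCode.eval, ha, hb, Seq.seq]

theorem recIn_listOracle_comp {f : List ℕ → ℕ} {p : List ℕ → List ℕ} {q : List ℕ → ℕ → ℕ}
    (hp : Primrec p) (hq : Primrec₂ q) :
    RecIn (listOracle f) (listOracle fun l => q l (f (p l))) := by
  obtain ⟨cp, hcp⟩ := OCode.exists_eval_eq_some_of_primrec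
    (Primrec.encode.comp (hp.comp (Primrec.ofNat (List ℕ)))) (listOracle f)
  obtain ⟨cq, hcq⟩ := OCode.exists_eval_eq_some_of_primrec
    (hq.comp ((Primrec.ofNat _).comp (Primrec.fst.comp Primrec.unpair))
      (Primrec.snd.comp Primrec.unpair)) (listOracle f)
  obtain ⟨cid, hcid⟩ := OCode.exists_eval_eq_some_of_primrec Primrec.id (listOracle f)
  refine ⟨.comp cq (.pair cid (.comp .oracle cp)), funext fun m => ?_⟩
  have hf : (OCode.comp .oracle cp).eval (listOracle f) m =
      Part.some (f (p (Denumerable.ofNat (List ℕ) m))) := by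
    rw [OCode.eval_comp_of_eq_some (hcp m)]
    simp [OCode.eval, listOracle]
  rw [OCode.eval_comp_of_eq_some (OCode.eval_pair_of_eq_some (hcid m) hf), hcq]
  simp [listOracle]

theorem incList_cons {A : Set ℕ} {k a : ℕ} {l : List ℕ} (hl : incList A k l) (ha : a ∈ A)
    (hlt : ∀ b ∈ l, a < b) : incList A (k + 1) (a :: l) :=
  ⟨by rw [List.length_cons, hl.1], List.pairwise_cons.2 ⟨hlt, hl.2.1⟩,
    List.forall_mem_cons.2 ⟨ha, hl.2.2⟩⟩

def IsRainbow (g : List ℕ → ℕ) (R : Set ℕ) (k : ℕ) : Prop :=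
  ∀ l₁ l₂ : List ℕ, incList R k l₁ → incList R k l₂ → g l₁ = g l₂ → l₁ = l₂

def redirectHead (w : ℕ) (l : List ℕ) : List ℕ :=
  if w.unpair.1 < w.unpair.2 ∧ l.head? = some w.unpair.2 then w.unpair.1 :: l.tail else l

def boundedColoring (f : List ℕ → ℕ) (l : List ℕ) : ℕ :=
  Encodable.encode (redirectHead (f l.tail) l)

theorem primrec₂_redirectHead : Primrec₂ redirectHead := by
  have hx : Primrec fun w : ℕ × List ℕ => w.1.unpair.1 :=
    Primrec.fst.comp (Primrec.unpair.comp Primrec.fst)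
  have hy : Primrec fun w : ℕ × List ℕ => w.1.unpair.2 :=
    Primrec.snd.comp (Primrec.unpair.comp Primrec.fst)
  exact Primrec.ite
    (PrimrecPred.and (Primrec.nat_lt.comp hx hy)
      (Primrec.eq.comp (Primrec.list_head?.comp Primrec.snd) (Primrec.option_some.comp hy)))
    (Primrec.list_cons.comp hx (Primrec.list_tail.comp Primrec.snd)) Primrec.snd

theorem recIn_boundedColoring (f : List ℕ → ℕ) :
    RecIn (listOracle f) (listOracle (boundedColoring f)) :=
  recIn_listOracle_comp Primrec.list_tail
    (Primrec.encode.comp₂ (primrec₂_redirectHead.comp₂ Primrec₂.right Primrec₂.left))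

theorem redirectHead_pair_cons_left {x y : ℕ} (hxy : x < y) (l : List ℕ) :
    redirectHead (Nat.pair x y) (x :: l) = x :: l := by
  simp [redirectHead, hxy.ne]

theorem redirectHead_pair_cons_right {x y : ℕ} (hxy : x < y) (l : List ℕ) :
    redirectHead (Nat.pair x y) (y :: l) = x :: l := by
  simp [redirectHead, hxy]

theorem boundedColoring_cons_eq {f : List ℕ → ℕ} {x y : ℕ} {l : List ℕ} (hxy : x < y)
    (hfl : f l = Nat.pair x y) : boundedColoring f (x :: l) = boundedColoring f (y :: l) := by
  simp only [boundedColoring, List.tail_cons, hfl, redirectHead_pair_cons_left hxy,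
    redirectHead_pair_cons_right hxy]

theorem eq_or_eq_of_redirectHead_eq {f : List ℕ → ℕ} {l m : List ℕ}
    (h : redirectHead (f l.tail) l = m) : l = m ∨ l = (f m.tail).unpair.2 :: m.tail := by
  unfold redirectHead at h
  split_ifs at h with hc
  · cases l with
    | nil => simp at hc
    | cons a t =>
      obtain ⟨-, rfl⟩ : _ ∧ a = _ := by simpa using hc
      subst h
      exact Or.inr rfl
  · exact Or.inl h

theorem encard_boundedColoring_fiber_le_two (f : List ℕ → ℕ) (c : ℕ) :
    {l | boundedColoring f l = c}.encard ≤ 2 := by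
  set m := Denumerable.ofNat (List ℕ) c with hm
  have hsub : {l | boundedColoring f l = c} ⊆ {m, (f m.tail).unpair.2 :: m.tail} := fun l hl =>
    eq_or_eq_of_redirectHead_eq (by rw [hm, ← hl.out, boundedColoring, Denumerable.ofNat_encode])
  calc {l | boundedColoring f l = c}.encard
      ≤ ({m, (f m.tail).unpair.2 :: m.tail} : Set (List ℕ)).encard := Set.encard_mono hsub
    _ ≤ ({(f m.tail).unpair.2 :: m.tail} : Set (List ℕ)).encard + 1 := Set.encard_insert_le _ _
    _ = 2 := by rw [Set.encard_singleton, one_add_one_eq_two]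

theorem IsRainbow.apply_ne_pair {f : List ℕ → ℕ} {R : Set ℕ} {k x y : ℕ} {l : List ℕ}
    (hR : IsRainbow (boundedColoring f) R (k + 1)) (hx : x ∈ R) (hy : y ∈ R) (hxy : x < y)
    (hl : incList (R \ Set.Iic y) k l) : f l ≠ Nat.pair x y := by
  intro hfl
  have hlR : incList R k l := ⟨hl.1, hl.2.1, fun b hb => (hl.2.2 b hb).1⟩
  have hgt : ∀ b ∈ l, y < b := fun b hb => not_le.1 (hl.2.2 b hb).2
  have hxl := hR _ _ (incList_cons hlR hx fun b hb => hxy.trans (hgt b hb))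
    (incList_cons hlR hy hgt) (boundedColoring_cons_eq hxy hfl)
  exact hxy.ne (List.cons_eq_cons.1 hxl).1

theorem stmt6 (n : ℕ) (f : List ℕ → ℕ) :
    ∃ g : List ℕ → ℕ,
      RecIn (listOracle f) (listOracle g) ∧
      (∀ c : ℕ, {l : List ℕ | incList Set.univ (n + 1) l ∧ g l = c}.encard ≤ 2) ∧
      ∀ R : Set ℕ, R.Infinite →
        (∀ l₁ l₂ : List ℕ, incList R (n + 1) l₁ → incList R (n + 1) l₂ →
          g l₁ = g l₂ → l₁ = l₂) →
        ∃ F : Set ℕ, F.Finite ∧ (R \ F).Infinite ∧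
          ∃ c : ℕ, ∀ l : List ℕ, incList (R \ F) n l → f l ≠ c := by
  refine ⟨boundedColoring f, recIn_boundedColoring f,
    fun c => (Set.encard_mono fun l hl => hl.2).trans (encard_boundedColoring_fiber_le_two f c),
    fun R hR hrain => ?_⟩
  obtain ⟨x, hx⟩ := hR.nonempty
  obtain ⟨y, hy, hxy⟩ := hR.exists_gt x
  exact ⟨Set.Iic y, Set.finite_Iic y, hR.sdiff (Set.finite_Iic y), Nat.pair x y,
    fun l hl => IsRainbow.apply_ne_pair hrain hx hy hxy hl⟩

end
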